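/- Let k, ℓ be even positive integers and ν an integer with ν > k-2. If f : ℍ → ℂ is smooth with Δ_{2-k} f = 0 and g : ℍ → ℂ is holomorphic, then the Rankin-Cohen bracket [f,g]_ν (with f of weight 2-k and g of weight ℓ) is holomorphic on ℍ, i.e. ∂[f,g]_ν/∂τ̄ = 0. -/

import Mathlib

open Complex Finset
open scoped Real

/-- Generalized binomial coefficient `C(x, m) = x(x-1)⋯(x-m+1)/m!`. -/
noncomputable def gchoose (x : ℂ) (m : ℕ) : ℂ :=
  (∏ i ∈ Finset.range m, (x - i)) / (Nat.factorial m)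

/-- Wirtinger derivative `∂/∂τ`. -/
noncomputable def wderiv (f : ℂ → ℂ) (τ : ℂ) : ℂ :=
  (fderiv ℝ f τ 1 - Complex.I * fderiv ℝ f τ Complex.I) / 2

/-- Wirtinger derivative `∂/∂τ̄`. -/
noncomputable def wderivBar (f : ℂ → ℂ) (τ : ℂ) : ℂ :=
  (fderiv ℝ f τ 1 + Complex.I * fderiv ℝ f τ Complex.I) / 2

/-- Iterated Wirtinger derivative `∂^n/∂τ^n`. -/
noncomputable def wderivN : ℕ → (ℂ → ℂ) → (ℂ → ℂ)
  | 0, f => f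
  | n + 1, f => wderiv (wderivN n f)

/-- The ν-th Rankin-Cohen bracket of `f` (weight `k`) and `g` (weight `ℓ`). -/
noncomputable def RC (k l : ℂ) (ν : ℕ) (f g : ℂ → ℂ) (τ : ℂ) : ℂ :=
  (2 * (π : ℂ) * Complex.I)⁻¹ ^ ν *
    ∑ μ ∈ Finset.range (ν + 1), (-1 : ℂ) ^ μ * gchoose (k + ν - 1) (ν - μ) *
      gchoose (l + ν - 1) μ * wderivN μ f τ * wderivN (ν - μ) g τ
/-- The weight `κ` hyperbolic Laplacian `Δ_κ := -y²(∂²/∂x²+∂²/∂y²) + iκy(∂/∂x + i∂/∂y)`. -/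
noncomputable def hypLaplacian (κ : ℂ) (f : ℂ → ℂ) (τ : ℂ) : ℂ :=
  -(τ.im : ℂ) ^ 2 *
      (fderiv ℝ (fun z => fderiv ℝ f z 1) τ 1 +
        fderiv ℝ (fun z => fderiv ℝ f z Complex.I) τ Complex.I) +
    Complex.I * κ * (τ.im : ℂ) * (fderiv ℝ f τ 1 + Complex.I * fderiv ℝ f τ Complex.I)

lemma wderiv_congr {f g : ℂ → ℂ} {τ : ℂ} (h : f =ᶠ[nhds τ] g) : wderiv f τ = wderiv g τ := by
  unfold wderiv; rw [h.fderiv_eq]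

lemma wderivBar_congr {f g : ℂ → ℂ} {τ : ℂ} (h : f =ᶠ[nhds τ] g) :
    wderivBar f τ = wderivBar g τ := by
  unfold wderivBar; rw [h.fderiv_eq]

-- product rules
lemma wderiv_mul {a b : ℂ → ℂ} {τ : ℂ} (ha : DifferentiableAt ℝ a τ)
    (hb : DifferentiableAt ℝ b τ) :
    wderiv (fun z => a z * b z) τ = wderiv a τ * b τ + a τ * wderiv b τ := by
  unfold wderiv
  rw [fderiv_fun_mul ha hb]
  simp only [ContinuousLinearMap.add_apply, ContinuousLinearMap.smul_apply, smul_eq_mul]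
  ring

lemma wderivBar_mul {a b : ℂ → ℂ} {τ : ℂ} (ha : DifferentiableAt ℝ a τ)
    (hb : DifferentiableAt ℝ b τ) :
    wderivBar (fun z => a z * b z) τ = wderivBar a τ * b τ + a τ * wderivBar b τ := by
  unfold wderivBar
  rw [fderiv_fun_mul ha hb]
  simp only [ContinuousLinearMap.add_apply, ContinuousLinearMap.smul_apply, smul_eq_mul]
  ring

lemma wderiv_const_mul {a : ℂ → ℂ} {τ : ℂ} (ha : DifferentiableAt ℝ a τ) (c : ℂ) :
    wderiv (fun z => c * a z) τ = c * wderiv a τ := by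
  unfold wderiv
  rw [fderiv_const_mul ha]
  simp only [ContinuousLinearMap.smul_apply, smul_eq_mul]
  ring

lemma wderivBar_const_mul {a : ℂ → ℂ} {τ : ℂ} (ha : DifferentiableAt ℝ a τ) (c : ℂ) :
    wderivBar (fun z => c * a z) τ = c * wderivBar a τ := by
  unfold wderivBar
  rw [fderiv_const_mul ha]
  simp only [ContinuousLinearMap.smul_apply, smul_eq_mul]
  ring

lemma wderivBar_sum {ι : Type*} {s : Finset ι} {F : ι → ℂ → ℂ} {τ : ℂ}
    (hF : ∀ i ∈ s, DifferentiableAt ℝ (F i) τ) :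
    wderivBar (fun z => ∑ i ∈ s, F i z) τ = ∑ i ∈ s, wderivBar (F i) τ := by
  unfold wderivBar
  rw [fderiv_fun_sum hF]
  simp only [ContinuousLinearMap.sum_apply]
  rw [Finset.mul_sum, ← Finset.sum_add_distrib, Finset.sum_div]

lemma fderiv_fderiv_apply {u : ℂ → ℂ} (hu : ContDiff ℝ (⊤ : ℕ∞) u) (τ v w : ℂ) :
    fderiv ℝ (fun z => fderiv ℝ u z w) τ v = fderiv ℝ (fderiv ℝ u) τ v w := by
  have hd : DifferentiableAt ℝ (fderiv ℝ u) τ :=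
    ((hu.fderiv_right (m := (⊤ : ℕ∞)) (by simp)).differentiable (by simp)) τ
  rw [fderiv_clm_apply hd (differentiableAt_const w)]
  simp

lemma fderiv2_symm {u : ℂ → ℂ} (hu : ContDiff ℝ (⊤ : ℕ∞) u) (τ v w : ℂ) :
    fderiv ℝ (fderiv ℝ u) τ v w = fderiv ℝ (fderiv ℝ u) τ w v :=
  second_derivative_symmetric (fun y => (hu.differentiable (by simp) y).hasFDerivAt)
    (((hu.fderiv_right (m := (⊤ : ℕ∞)) (by simp)).differentiable (by simp) τ).hasFDerivAt) v w

lemma contDiff_fderiv_apply {u : ℂ → ℂ} (hu : ContDiff ℝ (⊤ : ℕ∞) u) (w : ℂ) :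
    ContDiff ℝ (⊤ : ℕ∞) (fun z => fderiv ℝ u z w) :=
  (hu.fderiv_right (by simp)).clm_apply contDiff_const

lemma contDiff_wderiv {u : ℂ → ℂ} (hu : ContDiff ℝ (⊤ : ℕ∞) u) : ContDiff ℝ (⊤ : ℕ∞) (wderiv u) := by
  show ContDiff ℝ (⊤ : ℕ∞) fun τ => (fderiv ℝ u τ 1 - Complex.I * fderiv ℝ u τ Complex.I) / 2
  exact ((contDiff_fderiv_apply hu 1).sub
    (contDiff_const.mul (contDiff_fderiv_apply hu Complex.I))).div_const 2

lemma contDiff_wderivBar {u : ℂ → ℂ} (hu : ContDiff ℝ (⊤ : ℕ∞) u) : ContDiff ℝ (⊤ : ℕ∞) (wderivBar u) := by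
  show ContDiff ℝ (⊤ : ℕ∞) fun τ => (fderiv ℝ u τ 1 + Complex.I * fderiv ℝ u τ Complex.I) / 2
  exact ((contDiff_fderiv_apply hu 1).add
    (contDiff_const.mul (contDiff_fderiv_apply hu Complex.I))).div_const 2

lemma contDiff_wderivN {u : ℂ → ℂ} (hu : ContDiff ℝ (⊤ : ℕ∞) u) (n : ℕ) :
    ContDiff ℝ (⊤ : ℕ∞) (wderivN n u) := by
  induction n with
  | zero => exact hu
  | succ n ih => exact contDiff_wderiv ih

/-- derivative of a linear combination of first partials -/
lemma fderiv_wcomb {u : ℂ → ℂ} (hu : ContDiff ℝ (⊤ : ℕ∞) u) (c : ℂ) (τ v : ℂ) :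
    fderiv ℝ (fun z => (fderiv ℝ u z 1 + c * fderiv ℝ u z Complex.I) / 2) τ v
      = (fderiv ℝ (fderiv ℝ u) τ v 1 + c * fderiv ℝ (fderiv ℝ u) τ v Complex.I) / 2 := by
  have h1 : DifferentiableAt ℝ (fun z => fderiv ℝ u z 1) τ :=
    ((contDiff_fderiv_apply hu 1).differentiable (by simp)) τ
  have hI : DifferentiableAt ℝ (fun z => fderiv ℝ u z Complex.I) τ :=
    ((contDiff_fderiv_apply hu Complex.I).differentiable (by simp)) τ
  have he : (fun z => (fderiv ℝ u z 1 + c * fderiv ℝ u z Complex.I) / 2)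
      = fun z => (2:ℂ)⁻¹ * (fderiv ℝ u z 1 + c * fderiv ℝ u z Complex.I) := by
    funext z; ring
  rw [he, fderiv_const_mul (h1.fun_add (hI.const_mul c)), fderiv_fun_add h1 (hI.const_mul c),
    fderiv_const_mul hI]
  simp only [ContinuousLinearMap.add_apply, ContinuousLinearMap.smul_apply, smul_eq_mul]
  rw [fderiv_fderiv_apply hu, fderiv_fderiv_apply hu]
  ring

lemma wderiv_wderivBar_comm {u : ℂ → ℂ} (hu : ContDiff ℝ (⊤ : ℕ∞) u) (τ : ℂ) :
    wderivBar (wderiv u) τ = wderiv (wderivBar u) τ := by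
  have hw : wderiv u = fun z => (fderiv ℝ u z 1 + (-Complex.I) * fderiv ℝ u z Complex.I) / 2 := by
    funext z; unfold wderiv; ring
  have hwb : wderivBar u = fun z => (fderiv ℝ u z 1 + Complex.I * fderiv ℝ u z Complex.I) / 2 := rfl
  rw [hw, hwb]
  unfold wderivBar wderiv
  rw [fderiv_wcomb hu, fderiv_wcomb hu, fderiv_wcomb hu, fderiv_wcomb hu]
  have hs := fderiv2_symm hu τ 1 Complex.I
  set S := fderiv ℝ (fderiv ℝ u) τ
  have hI : (Complex.I : ℂ) * Complex.I = -1 := Complex.I_mul_I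
  linear_combination (-Complex.I / 2) * hs


lemma fderivR_of_holo {u : ℂ → ℂ} {z : ℂ} (h : DifferentiableAt ℂ u z) (v : ℂ) :
    fderiv ℝ u z v = v * deriv u z := by
  rw [(h.hasFDerivAt.restrictScalars ℝ).fderiv]
  have hv : (fderiv ℂ u z) v = v * (fderiv ℂ u z) 1 := by
    conv_lhs => rw [show v = v • (1:ℂ) by simp]
    rw [(fderiv ℂ u z).map_smul]; simp [smul_eq_mul]
  simpa [fderiv_apply_one_eq_deriv] using hv

lemma wderiv_of_holo {u : ℂ → ℂ} {z : ℂ} (h : DifferentiableAt ℂ u z) :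
    wderiv u z = deriv u z := by
  unfold wderiv
  rw [fderivR_of_holo h, fderivR_of_holo h]
  have hI : Complex.I * Complex.I = -1 := Complex.I_mul_I
  linear_combination (-(deriv u z) / 2) * hI

lemma wderivBar_of_holo {u : ℂ → ℂ} {z : ℂ} (h : DifferentiableAt ℂ u z) :
    wderivBar u z = 0 := by
  unfold wderivBar
  rw [fderivR_of_holo h, fderivR_of_holo h]
  have hI : Complex.I * Complex.I = -1 := Complex.I_mul_I
  linear_combination ((deriv u z) / 2) * hI

lemma hasFDerivAt_im_zpow (n : ℤ) {τ : ℂ} (hτ : τ.im ≠ 0) :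
    HasFDerivAt (fun z : ℂ => ((z.im : ℂ)) ^ n)
      (((ContinuousLinearMap.smulRight (1 : ℂ →L[ℂ] ℂ)
        ((n : ℂ) * ((τ.im:ℂ)) ^ (n-1))).restrictScalars ℝ).comp
        (Complex.ofRealCLM.comp Complex.imCLM)) τ := by
  have hin : HasFDerivAt (fun z : ℂ => ((z.im : ℂ)))
      (Complex.ofRealCLM.comp Complex.imCLM) τ :=
    (Complex.ofRealCLM.comp Complex.imCLM).hasFDerivAt
  have hne : ((τ.im : ℂ)) ≠ 0 := Complex.ofReal_ne_zero.mpr hτ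
  have hout := ((hasDerivAt_zpow n ((τ.im : ℂ)) (Or.inl hne)).hasFDerivAt).restrictScalars ℝ
  exact hout.comp τ hin

lemma diffAt_im_zpow (n : ℤ) {τ : ℂ} (hτ : τ.im ≠ 0) :
    DifferentiableAt ℝ (fun z : ℂ => ((z.im : ℂ)) ^ n) τ :=
  (hasFDerivAt_im_zpow n hτ).differentiableAt

lemma wderiv_im_zpow (n : ℤ) {τ : ℂ} (hτ : τ.im ≠ 0) :
    wderiv (fun z : ℂ => ((z.im : ℂ)) ^ n) τ
      = -Complex.I / 2 * n * ((τ.im:ℂ)) ^ (n-1) := by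
  unfold wderiv
  rw [(hasFDerivAt_im_zpow n hτ).fderiv]
  simp [ContinuousLinearMap.comp_apply]
  ring

lemma harmonic_rel (κ : ℂ) {f : ℂ → ℂ} (hf : ContDiff ℝ (⊤ : ℕ∞) f) {τ : ℂ}
    (hτ : 0 < τ.im) (h0 : hypLaplacian κ f τ = 0) :
    wderiv (wderivBar f) τ = Complex.I * κ / (2 * (τ.im:ℂ)) * wderivBar f τ := by
  have hy : ((τ.im : ℝ) : ℂ) ≠ 0 := Complex.ofReal_ne_zero.mpr (ne_of_gt hτ)
  have hwb : wderivBar f = fun z => (fderiv ℝ f z 1 + Complex.I * fderiv ℝ f z Complex.I) / 2 :=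
    rfl
  unfold hypLaplacian at h0
  rw [fderiv_fderiv_apply hf, fderiv_fderiv_apply hf] at h0
  have hs := fderiv2_symm hf τ 1 Complex.I
  conv_lhs => rw [hwb]
  unfold wderiv
  rw [fderiv_wcomb hf, fderiv_wcomb hf]
  rw [show wderivBar f τ
      = (fderiv ℝ f τ 1 + Complex.I * fderiv ℝ f τ Complex.I) / 2 from rfl]
  set S := fderiv ℝ (fderiv ℝ f) τ with hS
  have step1 : ((S 1 1 + Complex.I * S 1 Complex.I) / 2
        - Complex.I * ((S Complex.I 1 + Complex.I * S Complex.I Complex.I) / 2)) / 2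
      = (S 1 1 + S Complex.I Complex.I) / 4 := by
    have hI : Complex.I * Complex.I = -1 := Complex.I_mul_I
    linear_combination (Complex.I/4) * hs - (S Complex.I Complex.I / 4) * hI
  rw [step1]
  have goal' : ((τ.im:ℂ))^2 * ((S 1 1 + S Complex.I Complex.I) / 4)
      = ((τ.im:ℂ))^2 * (Complex.I * κ / (2 * (τ.im:ℂ))
          * ((fderiv ℝ f τ 1 + Complex.I * fderiv ℝ f τ Complex.I) / 2)) := by
    have hinner : ((τ.im:ℂ))^2 * (Complex.I * κ / (2 * (τ.im:ℂ))
          * ((fderiv ℝ f τ 1 + Complex.I * fderiv ℝ f τ Complex.I) / 2))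
        = (τ.im:ℂ) * (Complex.I * κ
            * (fderiv ℝ f τ 1 + Complex.I * fderiv ℝ f τ Complex.I) / 4) := by
      field_simp
      ring
    rw [hinner]
    linear_combination -h0/4
  exact mul_left_cancel₀ (pow_ne_zero 2 hy) goal'

lemma wderivN_wderivBar_formula (k : ℕ) {f : ℂ → ℂ} (hf : ContDiff ℝ (⊤ : ℕ∞) f)
    (hharm : ∀ τ : ℂ, 0 < τ.im → hypLaplacian (2 - (k : ℂ)) f τ = 0) (μ : ℕ) :
    ∀ τ : ℂ, 0 < τ.im →
      wderivN μ (wderivBar f) τ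
        = (∏ j ∈ Finset.range μ, ((2 - (k:ℂ)) + j)) * (Complex.I/2)^μ
            * ((τ.im:ℂ)) ^ (-(μ:ℤ)) * wderivBar f τ := by
  induction μ with
  | zero => intro τ hτ; simp [wderivN]
  | succ μ ih =>
    intro τ hτ
    have hy : ((τ.im : ℝ) : ℂ) ≠ 0 := Complex.ofReal_ne_zero.mpr (ne_of_gt hτ)
    have hopen : IsOpen {z : ℂ | 0 < z.im} := isOpen_lt continuous_const Complex.continuous_im
    have hev : wderivN μ (wderivBar f) =ᶠ[nhds τ]
        fun z => ((∏ j ∈ Finset.range μ, ((2 - (k:ℂ)) + j)) * (Complex.I/2)^μ)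
          * (((z.im:ℂ)) ^ (-(μ:ℤ)) * wderivBar f z) := by
      filter_upwards [hopen.mem_nhds hτ] with z hz
      rw [ih z hz]; ring
    have hh : ContDiff ℝ (⊤ : ℕ∞) (wderivBar f) := contDiff_wderivBar hf
    have hdiff_h : DifferentiableAt ℝ (wderivBar f) τ := (hh.differentiable (by simp)) τ
    have hdiff_p : DifferentiableAt ℝ (fun z : ℂ => ((z.im:ℂ)) ^ (-(μ:ℤ))) τ :=
      diffAt_im_zpow _ (ne_of_gt hτ)
    show wderiv (wderivN μ (wderivBar f)) τ = _
    rw [wderiv_congr hev, wderiv_const_mul (hdiff_p.fun_mul hdiff_h),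
        wderiv_mul hdiff_p hdiff_h, wderiv_im_zpow _ (ne_of_gt hτ),
        harmonic_rel (2-(k:ℂ)) hf hτ (hharm τ hτ), Finset.prod_range_succ]
    have h1 : ((τ.im:ℂ)) ^ (-(μ:ℤ)) = ((τ.im:ℂ)) ^ (-(μ:ℤ)-1) * (τ.im:ℂ) := by
      rw [← zpow_add_one₀ hy]; norm_num
    have h2 : ((τ.im:ℂ)) ^ (-((μ+1 : ℕ):ℤ)) = ((τ.im:ℂ)) ^ (-(μ:ℤ)-1) := by
      congr 1; push_cast; ring
    rw [h2, h1]
    field_simp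
    push_cast
    ring

lemma wderivBar_wderivN {f : ℂ → ℂ} (hf : ContDiff ℝ (⊤ : ℕ∞) f) (μ : ℕ) :
    wderivBar (wderivN μ f) = wderivN μ (wderivBar f) := by
  induction μ with
  | zero => rfl
  | succ μ ih =>
    funext τ
    show wderivBar (wderiv (wderivN μ f)) τ = wderiv (wderivN μ (wderivBar f)) τ
    rw [wderiv_wderivBar_comm (contDiff_wderivN hf μ) τ, ih]

lemma isOpen_UHP : IsOpen {z : ℂ | 0 < z.im} := isOpen_lt continuous_const Complex.continuous_im

lemma wderivN_holo {g : ℂ → ℂ} (hg : DifferentiableOn ℂ g {τ : ℂ | 0 < τ.im}) (n : ℕ) :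
    ∃ u : ℂ → ℂ, DifferentiableOn ℂ u {τ : ℂ | 0 < τ.im} ∧
      ∀ z ∈ {τ : ℂ | 0 < τ.im}, wderivN n g z = u z := by
  induction n with
  | zero => exact ⟨g, hg, fun z _ => rfl⟩
  | succ n ih =>
    obtain ⟨u, hu, heq⟩ := ih
    refine ⟨deriv u, ?_, ?_⟩
    · exact fun z hz => ((hu.analyticOnNhd isOpen_UHP).deriv z hz).differentiableAt.differentiableWithinAt
    · intro z hz
      have hev : wderivN n g =ᶠ[nhds z] u :=
        Filter.eventuallyEq_of_mem (isOpen_UHP.mem_nhds hz) heq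
      show wderiv (wderivN n g) z = deriv u z
      rw [wderiv_congr hev]
      exact wderiv_of_holo (hu.differentiableAt (isOpen_UHP.mem_nhds hz))

lemma wderivN_g_daR {g : ℂ → ℂ} (hg : DifferentiableOn ℂ g {τ : ℂ | 0 < τ.im}) (n : ℕ)
    {τ : ℂ} (hτ : 0 < τ.im) :
    DifferentiableAt ℝ (wderivN n g) τ ∧ wderivBar (wderivN n g) τ = 0 := by
  obtain ⟨u, hu, heq⟩ := wderivN_holo hg n
  have hev : wderivN n g =ᶠ[nhds τ] u :=
    Filter.eventuallyEq_of_mem (isOpen_UHP.mem_nhds hτ) heq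
  have huC : DifferentiableAt ℂ u τ := hu.differentiableAt (isOpen_UHP.mem_nhds hτ)
  constructor
  · exact (DifferentiableAt.restrictScalars ℝ huC).congr_of_eventuallyEq hev
  · rw [wderivBar_congr hev]
    exact wderivBar_of_holo huC

lemma wderivBar_zero_fun (τ : ℂ) : wderivBar (fun _ => (0:ℂ)) τ = 0 := by
  simp [wderivBar]

lemma gchoose_vanish (k ν μ : ℕ) (hk2 : 2 ≤ k) (hν : k - 1 ≤ ν) (hμ : μ + 2 ≤ k) :
    gchoose ((2 - (k:ℂ)) + ν - 1) (ν - μ) = 0 := by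
  unfold gchoose
  rw [Finset.prod_eq_zero (Finset.mem_range.mpr (show ν + 1 - k < ν - μ by omega)) _, zero_div]
  rw [Nat.cast_sub (by omega : k ≤ ν + 1)]
  push_cast
  ring

lemma prod_vanish (k μ : ℕ) (hk2 : 2 ≤ k) (hμ : k - 1 ≤ μ) :
    (∏ j ∈ Finset.range μ, ((2 - (k:ℂ)) + j)) = 0 := by
  apply Finset.prod_eq_zero (Finset.mem_range.mpr (show k - 2 < μ by omega))
  rw [Nat.cast_sub (by omega : 2 ≤ k)]
  ring


/-- if `f` is smooth with `Δ_{2-k} f = 0`, `g` is holomorphic, and `ν > k-2`,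
then the Rankin-Cohen bracket `[f,g]_ν` (with `f` of weight `2-k`, `g` of weight `ℓ`)
is holomorphic on `ℍ`, i.e. `∂[f,g]_ν/∂τ̄ = 0`. -/
theorem RCB_holomorphic (k l : ℕ) (hk : Even k) (hk' : 0 < k) (hl : Even l) (hl' : 0 < l)
    (ν : ℕ) (hν : (k : ℤ) - 2 < (ν : ℤ)) (f g : ℂ → ℂ) (hf : ContDiff ℝ (⊤ : ℕ∞) f)
    (hharm : ∀ τ : ℂ, 0 < τ.im → hypLaplacian (2 - (k : ℂ)) f τ = 0)
    (hg : DifferentiableOn ℂ g {τ : ℂ | 0 < τ.im})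
    (τ : ℂ) (hτ : 0 < τ.im) :
    wderivBar (RC (2 - (k : ℂ)) (l : ℂ) ν f g) τ = 0 := by
  have hk2 : 2 ≤ k := by obtain ⟨m, hm⟩ := hk; omega
  have hνk : k - 1 ≤ ν := by omega
  have hF : ∀ μ : ℕ, DifferentiableAt ℝ (wderivN μ f) τ :=
    fun μ => ((contDiff_wderivN hf μ).differentiable (by simp)) τ
  have hG : ∀ m : ℕ, DifferentiableAt ℝ (wderivN m g) τ :=
    fun m => (wderivN_g_daR hg m hτ).1
  have hterm : ∀ μ ∈ Finset.range (ν + 1), DifferentiableAt ℝ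
      (fun z => (-1 : ℂ) ^ μ * gchoose ((2 - (k:ℂ)) + ν - 1) (ν - μ) *
        gchoose ((l:ℂ) + ν - 1) μ * wderivN μ f z * wderivN (ν - μ) g z) τ :=
    fun μ _ => (((hF μ).const_mul _).mul (hG _))
  have hRC : RC (2 - (k : ℂ)) (l : ℂ) ν f g
      = fun z => (2 * (Real.pi : ℂ) * Complex.I)⁻¹ ^ ν *
          ∑ μ ∈ Finset.range (ν + 1), (-1 : ℂ) ^ μ * gchoose ((2 - (k:ℂ)) + ν - 1) (ν - μ) *
            gchoose ((l:ℂ) + ν - 1) μ * wderivN μ f z * wderivN (ν - μ) g z := rfl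
  rw [hRC, wderivBar_const_mul (DifferentiableAt.fun_sum hterm),
      wderivBar_sum hterm]
  have hzero : ∀ μ ∈ Finset.range (ν + 1), wderivBar
      (fun z => (-1 : ℂ) ^ μ * gchoose ((2 - (k:ℂ)) + ν - 1) (ν - μ) *
        gchoose ((l:ℂ) + ν - 1) μ * wderivN μ f z * wderivN (ν - μ) g z) τ = 0 := by
    intro μ _
    rcases le_or_gt (μ + 2) k with hcase | hcase
    · have hT : (fun z => (-1 : ℂ) ^ μ * gchoose ((2 - (k:ℂ)) + ν - 1) (ν - μ) *
          gchoose ((l:ℂ) + ν - 1) μ * wderivN μ f z * wderivN (ν - μ) g z)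
          = fun _ => (0 : ℂ) := by
        funext z
        rw [gchoose_vanish k ν μ hk2 hνk hcase]
        ring
      rw [hT, wderivBar_zero_fun]
    · have hT : (fun z => (-1 : ℂ) ^ μ * gchoose ((2 - (k:ℂ)) + ν - 1) (ν - μ) *
          gchoose ((l:ℂ) + ν - 1) μ * wderivN μ f z * wderivN (ν - μ) g z)
          = fun z => ((-1 : ℂ) ^ μ * gchoose ((2 - (k:ℂ)) + ν - 1) (ν - μ) *
              gchoose ((l:ℂ) + ν - 1) μ) * (wderivN μ f z * wderivN (ν - μ) g z) := by
        funext z; ring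
      rw [hT, wderivBar_const_mul ((hF μ).fun_mul (hG _)), wderivBar_mul (hF μ) (hG _),
        (wderivN_g_daR hg _ hτ).2, wderivBar_wderivN hf μ,
        wderivN_wderivBar_formula k hf hharm μ τ hτ,
        prod_vanish k μ hk2 (by omega)]
      ring
  rw [Finset.sum_congr rfl hzero]
  simp
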